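/- Let r₀ ∈ (0,1) be the unique zero in (0,1) of the derivative of φ, where φ(r) := √(r(1−r)) + (1−r)^{3/2}·log(1+√r) − (1/2)·(1−r)^{3/2}·log(1−r). Then the derivative of φ is strictly positive on (0,r₀) and strictly negative on (r₀,1); consequently φ is strictly increasing on (0,r₀] and strictly decreasing on [r₀,1). -/

import Mathlib

/-! Bounding the terms of the closed form of `φ′` gives `φ′ > 0` on `(0, 1/100)` and `φ′ < 0`
on `(19/20, 1)`. By Darboux's theorem a derivative without zeros on an interval has constant
sign there, so `φ′ > 0` on `(0,r₀)` and `φ′ < 0` on `(r₀,1)`; monotonicity then follows from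
the mean value theorem. -/

/-- `φ(r) = √(r(1−r)) + (1−r)^{3/2}·log(1+√r) − (1/2)(1−r)^{3/2}·log(1−r)`. -/
noncomputable def phi (r : ℝ) : ℝ :=
  Real.sqrt (r * (1 - r)) + (1 - r) ^ ((3 : ℝ) / 2) * Real.log (1 + Real.sqrt r)
    - (1 / 2) * (1 - r) ^ ((3 : ℝ) / 2) * Real.log (1 - r)

open Set

noncomputable def phiDeriv (r : ℝ) : ℝ :=
  (1 - 2 * r) / (2 * √(r * (1 - r)))
    - 3 / 2 * √(1 - r) * Real.log (1 + √r)
    + (1 - r) * √(1 - r) / (2 * √r * (1 + √r))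
    + 3 / 4 * √(1 - r) * Real.log (1 - r)
    + 1 / 2 * √(1 - r)

lemma hasDerivAt_one_sub_rpow_three_halves {r : ℝ} (hr : r < 1) :
    HasDerivAt (fun x : ℝ => (1 - x) ^ ((3 : ℝ) / 2)) (-(3 / 2) * √(1 - r)) r := by
  have h := ((hasDerivAt_id' r).const_sub (1 : ℝ)).rpow_const (p := (3 : ℝ) / 2)
    (Or.inl (sub_pos.2 hr).ne')
  refine h.congr_deriv ?_
  rw [show (3 : ℝ) / 2 - 1 = 1 / 2 by norm_num, ← Real.sqrt_eq_rpow]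
  ring

lemma hasDerivAt_phi {r : ℝ} (hr : r ∈ Ioo 0 1) : HasDerivAt phi (phiDeriv r) r := by
  obtain ⟨h0, h1⟩ := hr
  have hr1 : 0 < 1 - r := sub_pos.2 h1
  have hprod : HasDerivAt (fun x : ℝ => x * (1 - x)) (1 - 2 * r) r := by
    refine ((hasDerivAt_id' r).mul ((hasDerivAt_id' r).const_sub (1 : ℝ))).congr_deriv ?_
    ring
  have hsqrt := hprod.sqrt (by positivity)
  have hpow := hasDerivAt_one_sub_rpow_three_halves h1
  have hlog₁ := ((Real.hasDerivAt_sqrt h0.ne').const_add (1 : ℝ)).log (by positivity)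
  have hlog₂ := ((hasDerivAt_id' r).const_sub (1 : ℝ)).log hr1.ne'
  have h := (hsqrt.add (hpow.mul hlog₁)).sub ((hpow.mul hlog₂).const_mul (1 / 2 : ℝ))
  have hphi : phi = fun x : ℝ => √(x * (1 - x)) + (1 - x) ^ ((3 : ℝ) / 2) * Real.log (1 + √x)
      - 1 / 2 * ((1 - x) ^ ((3 : ℝ) / 2) * Real.log (1 - x)) := by
    funext x; unfold phi; ring
  have hpow_eq : (1 - r) ^ ((3 : ℝ) / 2) = (1 - r) * √(1 - r) := by
    rw [show (3 : ℝ) / 2 = 1 + 1 / 2 by norm_num, Real.rpow_add hr1, Real.rpow_one,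
      ← Real.sqrt_eq_rpow]
  rw [hphi]
  refine h.congr_deriv ?_
  unfold phiDeriv
  rw [hpow_eq]
  field_simp
  ring

lemma differentiableAt_phi {r : ℝ} (hr : r ∈ Ioo 0 1) : DifferentiableAt ℝ phi r :=
  (hasDerivAt_phi hr).differentiableAt

lemma continuousOn_phi : ContinuousOn phi (Ioo 0 1) :=
  fun _ hr => (differentiableAt_phi hr).continuousAt.continuousWithinAt

lemma phiDeriv_pos_of_lt {r : ℝ} (h0 : 0 < r) (h1 : r < 1 / 100) : 0 < phiDeriv r := by
  have hr1 : (0 : ℝ) < 1 - r := by linarith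
  have hs : 0 < √r := Real.sqrt_pos.2 h0
  have hs2 : √r ^ 2 = r := Real.sq_sqrt h0.le
  have hs10 : √r < 1 / 10 := by nlinarith
  have ht : 0 < √(1 - r) := Real.sqrt_pos.2 hr1
  have ht2 : √(1 - r) ^ 2 = 1 - r := Real.sq_sqrt hr1.le
  have ht1 : √(1 - r) ≤ 1 := by nlinarith
  have hu : 0 < √(r * (1 - r)) := Real.sqrt_pos.2 (by nlinarith)
  have hu2 : √(r * (1 - r)) ^ 2 = r * (1 - r) := Real.sq_sqrt (by nlinarith)
  have hu_le : √(r * (1 - r)) ≤ √r := Real.sqrt_le_sqrt (by nlinarith)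
  have hfirst : (49 : ℝ) / 10 ≤ (1 - 2 * r) / (2 * √(r * (1 - r))) := by
    rw [le_div_iff₀ (by positivity)]
    nlinarith
  have hlog₁_nonneg : 0 ≤ Real.log (1 + √r) := Real.log_nonneg (by linarith)
  have hlog₁_le : Real.log (1 + √r) ≤ √r := by
    linarith [Real.log_le_sub_one_of_pos (show (0 : ℝ) < 1 + √r by linarith)]
  have hlog₂_nonpos : Real.log (1 - r) ≤ 0 := Real.log_nonpos hr1.le (by linarith)
  have hlog₂_ge : -(1 : ℝ) / 99 ≤ Real.log (1 - r) := by
    have h := Real.log_le_sub_one_of_pos (inv_pos.2 hr1)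
    rw [Real.log_inv] at h
    have : (1 - r)⁻¹ ≤ 100 / 99 := by
      rw [inv_le_comm₀ hr1 (by norm_num)]; linarith
    linarith
  have hthird : 0 ≤ (1 - r) * √(1 - r) / (2 * √r * (1 + √r)) := by positivity
  unfold phiDeriv
  nlinarith [mul_nonneg ht.le hlog₁_nonneg]

lemma phiDeriv_neg_of_gt {r : ℝ} (h0 : 19 / 20 < r) (h1 : r < 1) : phiDeriv r < 0 := by
  have hr0 : (0 : ℝ) < r := by linarith
  have hr1 : (0 : ℝ) < 1 - r := by linarith
  have hs : 0 < √r := Real.sqrt_pos.2 hr0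
  have hs2 : √r ^ 2 = r := Real.sq_sqrt hr0.le
  have hs9 : (9 : ℝ) / 10 ≤ √r := by nlinarith
  have ht : 0 < √(1 - r) := Real.sqrt_pos.2 hr1
  have ht2 : √(1 - r) ^ 2 = 1 - r := Real.sq_sqrt hr1.le
  have ht4 : √(1 - r) ≤ 1 / 4 := by nlinarith
  have hu : 0 < √(r * (1 - r)) := Real.sqrt_pos.2 (by nlinarith)
  have hu2 : √(r * (1 - r)) ^ 2 = r * (1 - r) := Real.sq_sqrt (by nlinarith)
  have hu_le : √(r * (1 - r)) ≤ √(1 - r) := Real.sqrt_le_sqrt (by nlinarith)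
  have hfirst : (1 - 2 * r) / (2 * √(r * (1 - r))) ≤ -9 / 5 := by
    rw [div_le_iff₀ (by positivity)]
    nlinarith
  have hlog₁_nonneg : 0 ≤ Real.log (1 + √r) := Real.log_nonneg (by linarith)
  have hlog₂_nonpos : Real.log (1 - r) ≤ 0 := Real.log_nonpos hr1.le (by linarith)
  have hthird : (1 - r) * √(1 - r) / (2 * √r * (1 + √r)) ≤ √(1 - r) := by
    rw [div_le_iff₀ (by positivity)]
    nlinarith
  unfold phiDeriv
  nlinarith [mul_nonneg ht.le hlog₁_nonneg, mul_nonpos_of_nonneg_of_nonpos ht.le hlog₂_nonpos]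

lemma deriv_phi_neg_or_pos {s : Set ℝ} (hs : Convex ℝ s) (hsub : s ⊆ Ioo 0 1)
    (hne : ∀ r ∈ s, deriv phi r ≠ 0) :
    (∀ r ∈ s, deriv phi r < 0) ∨ ∀ r ∈ s, 0 < deriv phi r :=
  hasDerivWithinAt_forall_lt_or_forall_gt_of_forall_ne hs
    (fun _ hr => (differentiableAt_phi (hsub hr)).hasDerivAt.hasDerivWithinAt) hne

lemma deriv_phi_pos_of_forall_ne_zero {a : ℝ} (ha : a ≤ 1)
    (hne : ∀ r ∈ Ioo 0 a, deriv phi r ≠ 0) : ∀ r ∈ Ioo 0 a, 0 < deriv phi r := by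
  intro r hr
  have ha0 : 0 < a := hr.1.trans hr.2
  set b := min a (1 / 100) / 2 with hb_def
  have hb : b ∈ Ioo 0 a := ⟨by positivity, by linarith [min_le_left a (1 / 100)]⟩
  have hb_pos : 0 < deriv phi b := by
    rw [(hasDerivAt_phi ⟨hb.1, hb.2.trans_le ha⟩).deriv]
    exact phiDeriv_pos_of_lt hb.1 (by linarith [min_le_right a (1 / 100)])
  rcases deriv_phi_neg_or_pos (convex_Ioo 0 a) (Ioo_subset_Ioo_right ha) hne with hneg | hpos
  · exact absurd (hneg b hb) hb_pos.not_gt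
  · exact hpos r hr

lemma deriv_phi_neg_of_forall_ne_zero {a : ℝ} (ha : 0 ≤ a)
    (hne : ∀ r ∈ Ioo a 1, deriv phi r ≠ 0) : ∀ r ∈ Ioo a 1, deriv phi r < 0 := by
  intro r hr
  have ha1 : a < 1 := hr.1.trans hr.2
  set b := (max a (19 / 20) + 1) / 2 with hb_def
  have hmax : max a (19 / 20) < 1 := max_lt ha1 (by norm_num)
  have hb : b ∈ Ioo a 1 := ⟨by linarith [le_max_left a (19 / 20)], by linarith⟩
  have hb_neg : deriv phi b < 0 := by
    rw [(hasDerivAt_phi ⟨ha.trans_lt hb.1, hb.2⟩).deriv]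
    exact phiDeriv_neg_of_gt (by linarith [le_max_right a (19 / 20)]) hb.2
  rcases deriv_phi_neg_or_pos (convex_Ioo a 1) (Ioo_subset_Ioo_left ha) hne with hneg | hpos
  · exact hneg r hr
  · exact absurd (hpos b hb) hb_neg.not_gt

theorem stmt_11_general (r₀ : ℝ) (hr₀ : r₀ ∈ Set.Ioo (0 : ℝ) 1)
    (huniq : ∀ r ∈ Set.Ioo (0 : ℝ) 1, deriv phi r = 0 → r = r₀) :
    (∀ r ∈ Set.Ioo (0 : ℝ) r₀, 0 < deriv phi r) ∧
    (∀ r ∈ Set.Ioo r₀ (1 : ℝ), deriv phi r < 0) ∧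
    StrictMonoOn phi (Set.Ioc (0 : ℝ) r₀) ∧ StrictAntiOn phi (Set.Ico r₀ (1 : ℝ)) := by
  obtain ⟨hr₀0, hr₀1⟩ := hr₀
  have hne : ∀ r ∈ Ioo 0 1, r ≠ r₀ → deriv phi r ≠ 0 := fun r hr h h0 => h (huniq r hr h0)
  have hpos : ∀ r ∈ Ioo 0 r₀, 0 < deriv phi r := deriv_phi_pos_of_forall_ne_zero hr₀1.le
    fun r hr => hne r ⟨hr.1, hr.2.trans hr₀1⟩ hr.2.ne
  have hneg : ∀ r ∈ Ioo r₀ 1, deriv phi r < 0 := deriv_phi_neg_of_forall_ne_zero hr₀0.le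
    fun r hr => hne r ⟨hr₀0.trans hr.1, hr.2⟩ hr.1.ne'
  refine ⟨hpos, hneg, ?_, ?_⟩
  · refine strictMonoOn_of_deriv_pos (convex_Ioc 0 r₀)
      (continuousOn_phi.mono (Ioc_subset_Ioo_right hr₀1)) ?_
    rwa [interior_Ioc]
  · refine strictAntiOn_of_deriv_neg (convex_Ico r₀ 1)
      (continuousOn_phi.mono (Ico_subset_Ioo_left hr₀0)) ?_
    rwa [interior_Ico]

/-- If `r₀` is the unique zero of `φ′` in `(0,1)`, then `φ′ > 0` on `(0,r₀)` and
`φ′ < 0` on `(r₀,1)`; consequently `φ` is strictly increasing on `(0,r₀]` and strictly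
decreasing on `[r₀,1)`. -/
theorem stmt_11 (r₀ : ℝ) (hr₀ : r₀ ∈ Set.Ioo (0 : ℝ) 1) (hzero : deriv phi r₀ = 0)
    (huniq : ∀ r ∈ Set.Ioo (0 : ℝ) 1, deriv phi r = 0 → r = r₀) :
    (∀ r ∈ Set.Ioo (0 : ℝ) r₀, 0 < deriv phi r) ∧
    (∀ r ∈ Set.Ioo r₀ (1 : ℝ), deriv phi r < 0) ∧
    StrictMonoOn phi (Set.Ioc (0 : ℝ) r₀) ∧ StrictAntiOn phi (Set.Ico r₀ (1 : ℝ)) :=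
  stmt_11_general r₀ hr₀ huniq
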